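/- Let 1 < p < ∞ with conjugate exponent p′ = p/(p−1), and let u, w be weights on ℝ and (0,∞) respectively. Assume that W(t)/t is quasi-increasing (there is C with W(t)/t ≤ C·W(s)/s for all 0 < t ≤ s), that w ∈ B*_∞, and that there is C such that for every bounded interval I, (∫_0^{u(I)} (φ_I(t)/W(t))^{p′} w(t) dt)^{1/p′} ≤ C |I| / W(u(I))^{1/p}, where φ_I(t) = sup{ |E| : E ⊆ I measurable, u(E) = t }. Then there is a constant C′ such that for every bounded interval I, (∫_0^{u(I)} (φ_I(t)/t)^{p′} dt)^{1/p′} ≤ C′ |I| / u(I)^{1/p}. -/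

import Mathlib

open MeasureTheory Filter Topology
open scoped ENNReal NNReal

noncomputable section

/-- The `u`-measure of a set `E`, `u(E) = ∫_E u`, as an extended nonnegative real. -/
def wMeas (u : ℝ → ℝ) (E : Set ℝ) : ℝ≥0∞ := ∫⁻ x in E, ENNReal.ofReal (u x)

/-- The `u`-measure of a set `E`, `u(E) = ∫_E u(x) dx`, as a real number. -/
def wInt (u : ℝ → ℝ) (E : Set ℝ) : ℝ := ∫ x in E, u x

/-- `W(r) = ∫_0^r w(s) ds`. -/
def Wf (w : ℝ → ℝ) (r : ℝ) : ℝ := ∫ t in Set.Ioo (0:ℝ) r, w t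

/-- A weight on `ℝ`: a positive locally integrable function. -/
def IsWeight (u : ℝ → ℝ) : Prop :=
  (∀ x, 0 < u x) ∧ MeasureTheory.LocallyIntegrable u volume

/-- A weight on `(0,∞)`: positive there and locally integrable on `(0,r)` for every `r > 0`. -/
def IsWeightOn (w : ℝ → ℝ) : Prop :=
  (∀ t, 0 < t → 0 < w t) ∧ ∀ r, 0 < r → MeasureTheory.IntegrableOn w (Set.Ioo (0:ℝ) r) volume

/-- Decreasing rearrangement (with respect to the weight `u`) of an `ℝ≥0∞`-valued function. -/
def rearrE (u : ℝ → ℝ) (g : ℝ → ℝ≥0∞) (t : ℝ) : ℝ≥0∞ :=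
  sInf {s : ℝ≥0∞ | wMeas u {x | s < g x} ≤ ENNReal.ofReal t}

/-- Decreasing rearrangement `f*_u` of `f` with respect to the weight `u`. -/
def rearr (u f : ℝ → ℝ) (t : ℝ) : ℝ≥0∞ :=
  rearrE u (fun x => ENNReal.ofReal |f x|) t

/-- The quasinorm of `Λ^p_u(w)` for `ℝ≥0∞`-valued functions. -/
def lorentzNormE (p : ℝ) (u w : ℝ → ℝ) (g : ℝ → ℝ≥0∞) : ℝ≥0∞ :=
  (∫⁻ t in Set.Ioi (0:ℝ), rearrE u g t ^ p * ENNReal.ofReal (w t)) ^ (1/p)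

/-- The quasinorm of the weighted Lorentz space `Λ^p_u(w)`. -/
def lorentzNorm (p : ℝ) (u w f : ℝ → ℝ) : ℝ≥0∞ :=
  lorentzNormE p u w (fun x => ENNReal.ofReal |f x|)

/-- The quasinorm of `Λ^{p,∞}_u(w)` for `ℝ≥0∞`-valued functions. -/
def weakLorentzNormE (p : ℝ) (u w : ℝ → ℝ) (g : ℝ → ℝ≥0∞) : ℝ≥0∞ :=
  ⨆ t ∈ Set.Ioi (0:ℝ), ENNReal.ofReal (Wf w t) ^ (1/p) * rearrE u g t

/-- The quasinorm of the weak weighted Lorentz space `Λ^{p,∞}_u(w)`. -/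
def weakLorentzNorm (p : ℝ) (u w f : ℝ → ℝ) : ℝ≥0∞ :=
  weakLorentzNormE p u w (fun x => ENNReal.ofReal |f x|)

/-- Membership in `Λ^p_u(w)`. -/
def MemLambda (p : ℝ) (u w f : ℝ → ℝ) : Prop :=
  Measurable f ∧ lorentzNorm p u w f < ∞

/-- The quasinorm of the Lorentz space `L^{p,q}(u)`, `0 < q ≤ ∞`. -/
def lpqNorm (p : ℝ) (q : ℝ≥0∞) (u f : ℝ → ℝ) : ℝ≥0∞ :=
  if q = ∞ then ⨆ t ∈ Set.Ioi (0:ℝ), ENNReal.ofReal t ^ (1/p) * rearr u f t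
  else (∫⁻ t in Set.Ioi (0:ℝ),
      (ENNReal.ofReal t ^ (1/p) * rearr u f t) ^ q.toReal / ENNReal.ofReal t) ^ (1/q.toReal)

/-- Membership in `L^{p,q}(u)`. -/
def MemLpq (p : ℝ) (q : ℝ≥0∞) (u f : ℝ → ℝ) : Prop :=
  Measurable f ∧ lpqNorm p q u f < ∞

/-- The associate norm `‖g‖_{(Λ^p_u(w))'}`. -/
def assocNorm (p : ℝ) (u w g : ℝ → ℝ) : ℝ≥0∞ :=
  ⨆ (f : ℝ → ℝ) (_ : MemLambda p u w f) (_ : lorentzNorm p u w f ≠ 0),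
    ENNReal.ofReal |∫ x, f x * g x * u x| / lorentzNorm p u w f

/-- The truncated Hilbert integral `∫_{|x−y|>ε} f(y)/(x−y) dy`. -/
def pvIntegral (f : ℝ → ℝ) (x ε : ℝ) : ℝ :=
  ∫ y in {y : ℝ | ε < |x - y|}, f y / (x - y)

/-- The principal value limit defining `Hf(x)` exists and equals `L`. -/
def HasHilbert (f : ℝ → ℝ) (x L : ℝ) : Prop :=
  Filter.Tendsto (fun ε : ℝ => (1 / Real.pi) * pvIntegral f x ε) (𝓝[>] 0) (𝓝 L)

/-- The Hilbert transform `Hf(x)` (junk value where the principal value does not exist). -/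
def hilbert (f : ℝ → ℝ) (x : ℝ) : ℝ :=
  limUnder (𝓝[>] (0:ℝ)) (fun ε => (1 / Real.pi) * pvIntegral f x ε)

/-- The Hilbert maximal operator `H*f(x)`. -/
def hilbertMax (f : ℝ → ℝ) (x : ℝ) : ℝ≥0∞ :=
  ⨆ ε ∈ Set.Ioi (0:ℝ), ENNReal.ofReal ((1 / Real.pi) * |pvIntegral f x ε|)

/-- The Hardy–Littlewood maximal operator over intervals of `ℝ`. -/
def maxOp (u : ℝ → ℝ) (x : ℝ) : ℝ≥0∞ :=
  ⨆ (a : ℝ) (b : ℝ) (_ : x ∈ Set.Ioo a b),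
    (∫⁻ y in Set.Ioo a b, ENNReal.ofReal |u y|) / ENNReal.ofReal (b - a)

/-- The Muckenhoupt class `A_1`: `Mu ≤ C u` a.e. -/
def A1 (u : ℝ → ℝ) : Prop :=
  ∃ C : ℝ, 0 < C ∧ ∀ᵐ x : ℝ ∂volume, maxOp u x ≤ ENNReal.ofReal (C * u x)

/-- The Muckenhoupt class `A_p`, `p > 1`. -/
def Ap (p : ℝ) (u : ℝ → ℝ) : Prop :=
  ∃ C : ℝ, 0 < C ∧ ∀ a b : ℝ, a < b →
    ((∫⁻ x in Set.Ioo a b, ENNReal.ofReal (u x)) / ENNReal.ofReal (b - a)) *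
      ((∫⁻ x in Set.Ioo a b, ENNReal.ofReal (u x ^ (-1 / (p - 1)))) /
        ENNReal.ofReal (b - a)) ^ (p - 1)
      ≤ ENNReal.ofReal C

/-- The class `B_p`: `∫_r^∞ (r/t)^p w(t) dt ≤ C W(r)`. -/
def Bp (p : ℝ) (w : ℝ → ℝ) : Prop :=
  ∃ C : ℝ, 0 < C ∧ ∀ r : ℝ, 0 < r →
    (∫⁻ t in Set.Ioi r, ENNReal.ofReal ((r / t) ^ p * w t)) ≤ ENNReal.ofReal (C * Wf w r)

/-- The class `B_{p,∞}`: the Hardy operator maps `L^p_dec(w)` to `L^{p,∞}(w)`. -/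
def BpInfty (p : ℝ) (w : ℝ → ℝ) : Prop :=
  ∃ C : ℝ, 0 < C ∧ ∀ f : ℝ → ℝ, (∀ t, 0 < t → 0 ≤ f t) → AntitoneOn f (Set.Ioi 0) →
    ∀ t : ℝ, 0 < t →
      ENNReal.ofReal (Wf w t) ^ (1/p) *
          ((∫⁻ s in Set.Ioo (0:ℝ) t, ENNReal.ofReal (f s)) / ENNReal.ofReal t)
        ≤ ENNReal.ofReal C *
            (∫⁻ s in Set.Ioi (0:ℝ), ENNReal.ofReal (f s) ^ p * ENNReal.ofReal (w s)) ^ (1/p)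

/-- The class `B*_∞`: `∫_0^r W(t)/t dt ≤ C W(r)`. -/
def BstarInfty (w : ℝ → ℝ) : Prop :=
  ∃ C : ℝ, 0 < C ∧ ∀ r : ℝ, 0 < r →
    (∫⁻ t in Set.Ioo (0:ℝ) r, ENNReal.ofReal (Wf w t / t)) ≤ ENNReal.ofReal (C * Wf w r)

/-- The `Δ_2` condition: `W(2r) ≤ C W(r)`. -/
def Delta2 (w : ℝ → ℝ) : Prop :=
  ∃ C : ℝ, 0 < C ∧ ∀ r : ℝ, 0 < r → Wf w (2 * r) ≤ C * Wf w r

/-- A doubling weight on `ℝ`: `u(2I) ≤ C u(I)` for every bounded interval `I`. -/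
def DoublingWeight (u : ℝ → ℝ) : Prop :=
  ∃ C : ℝ, 0 < C ∧ ∀ c r : ℝ, 0 < r →
    wInt u (Set.Ioo (c - 2*r) (c + 2*r)) ≤ C * wInt u (Set.Ioo (c - r) (c + r))

/-- `φ_I(t) = sup{|E| : E ⊆ I, u(E) = t}` for `I = (a,b)`. -/
def phiI (u : ℝ → ℝ) (a b t : ℝ) : ℝ :=
  sSup {m : ℝ | ∃ E : Set ℝ, MeasurableSet E ∧ E ⊆ Set.Ioo a b ∧
    wInt u E = t ∧ (volume E).toReal = m}

/-- The index `p_w`:  `inf{p > 0 : t^p/W(t) ∈ L^{p'-1}((0,1), dt/t)}`, where for `p ≤ 1`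
(`p' = ∞`) the condition means essential boundedness on `(0,1)`. -/
def pwIndex (w : ℝ → ℝ) : ℝ :=
  sInf {p : ℝ | 0 < p ∧
    ((p ≤ 1 ∧ ∃ C : ℝ, ∀ᵐ t ∂(volume.restrict (Set.Ioo (0:ℝ) 1)), t ^ p / Wf w t ≤ C) ∨
     (1 < p ∧ (∫⁻ t in Set.Ioo (0:ℝ) 1,
        ENNReal.ofReal ((t ^ p / Wf w t) ^ (1 / (p - 1)) / t)) < ∞))}

/-!
Let `r = u(I)` and `p' = p/(p-1)`. Writing `(φ/t)^{p'} = (W/t)^{p'-1} · (W/t) (φ/W)^{p'}`,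
the first factor is at most `(C₀ W(r)/r)^{p'-1}` on `(0, r)` because `W(t)/t` is
quasi-increasing. Since a set of `u`-measure `s` splits into `⌈s/t⌉` pieces of `u`-measure at
most `t`, `φ_I(s) ≤ 2 (s/t) φ_I(t)`, so `φ_I/W` is quasi-decreasing. The condition `B*_∞` says
that `W(t)/t dt ≤ C w(t) dt` on every initial segment `(0, m)`, and by the layer cake formula
this passes to decreasing functions such as the decreasing envelope of `(φ_I/W)^{p'}`. Hence
`∫_0^r (φ_I/t)^{p'} ≲ (W(r)/r)^{p'-1} ∫_0^r (φ_I/W)^{p'} w`, and the hypothesis concludes,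
as `(W(r)/r)^{1/p} W(r)^{-1/p} = r^{-1/p}`.
-/

open Set

section AntitoneComparison

variable {μ ν : Measure ℝ} {r : ℝ} {C : ℝ≥0∞}

lemma AntitoneOn.exists_Ioo_subset_subset_Ioc {h : ℝ → ℝ} (hh : AntitoneOn h (Ioo 0 r))
    (c : ℝ) (hne : ({t | c < h t} ∩ Ioo 0 r).Nonempty) :
    ∃ m ∈ Ioc 0 r,
      Ioo 0 m ⊆ {t | c < h t} ∩ Ioo 0 r ∧ {t | c < h t} ∩ Ioo 0 r ⊆ Ioc 0 m := by
  set S := {t | c < h t} ∩ Ioo 0 r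
  have hbdd : BddAbove S := ⟨r, fun x hx => hx.2.2.le⟩
  obtain ⟨s₀, hs₀⟩ := hne
  refine ⟨sSup S,
    ⟨hs₀.2.1.trans_le (le_csSup hbdd hs₀), csSup_le ⟨s₀, hs₀⟩ fun x hx => hx.2.2.le⟩,
    fun x hx => ?_, fun x hx => ⟨hx.2.1, le_csSup hbdd hx⟩⟩
  obtain ⟨s, hs, hxs⟩ := exists_lt_of_lt_csSup ⟨s₀, hs₀⟩ hx.2
  have hx' : x ∈ Ioo 0 r := ⟨hx.1, hxs.trans hs.2.2⟩
  exact ⟨hs.1.trans_le (hh hx' hs.2 hxs.le), hx'⟩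

lemma measure_superlevelSet_le_of_antitoneOn [NullSingletonClass μ]
    (hμν : ∀ m ∈ Ioc 0 r, μ (Ioo 0 m) ≤ C * ν (Ioo 0 m)) {h : ℝ → ℝ}
    (hh : AntitoneOn h (Ioo 0 r)) (c : ℝ) :
    μ ({t | c < h t} ∩ Ioo 0 r) ≤ C * ν ({t | c < h t} ∩ Ioo 0 r) := by
  rcases eq_empty_or_nonempty ({t | c < h t} ∩ Ioo 0 r) with hS | hS
  · simp [hS]
  obtain ⟨m, hm, hIoo, hIoc⟩ := hh.exists_Ioo_subset_subset_Ioc c hS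
  calc μ ({t | c < h t} ∩ Ioo 0 r) ≤ μ (Ioc 0 m) := measure_mono hIoc
    _ = μ (Ioo 0 m) := measure_congr Ioo_ae_eq_Ioc.symm
    _ ≤ C * ν (Ioo 0 m) := hμν m hm
    _ ≤ C * ν ({t | c < h t} ∩ Ioo 0 r) := by gcongr

/-- The superlevel sets of `h` are initial segments of `(0, r)`: apply the layer cake formula. -/
lemma setLIntegral_le_of_antitoneOn [NullSingletonClass μ]
    (hμν : ∀ m ∈ Ioc 0 r, μ (Ioo 0 m) ≤ C * ν (Ioo 0 m)) {h : ℝ → ℝ}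
    (hh : AntitoneOn h (Ioo 0 r)) (hnn : ∀ t ∈ Ioo 0 r, 0 ≤ h t) :
    ∫⁻ t in Ioo 0 r, ENNReal.ofReal (h t) ∂μ ≤
      C * ∫⁻ t in Ioo 0 r, ENNReal.ofReal (h t) ∂ν := by
  have hnn' (ρ : Measure ℝ) : 0 ≤ᵐ[ρ.restrict (Ioo 0 r)] h :=
    (ae_restrict_iff' measurableSet_Ioo).mpr (.of_forall hnn)
  have hanti : Antitone fun c : ℝ => ν.restrict (Ioo 0 r) {t | c < h t} :=
    fun c c' hcc' => measure_mono fun t ht => hcc'.trans_lt ht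
  have hmeas (ρ : Measure ℝ) : AEMeasurable h (ρ.restrict (Ioo 0 r)) :=
    aemeasurable_restrict_of_antitoneOn measurableSet_Ioo hh
  rw [lintegral_eq_lintegral_meas_lt _ (hnn' μ) (hmeas μ),
    lintegral_eq_lintegral_meas_lt _ (hnn' ν) (hmeas ν),
    ← lintegral_const_mul _ hanti.measurable]
  refine lintegral_mono fun c => ?_
  simp only [Measure.restrict_apply' measurableSet_Ioo]
  exact measure_superlevelSet_le_of_antitoneOn hμν hh c

lemma exists_antitoneOn_le_le_mul {α : Type*} [LinearOrder α] {s : Set α} {Q : α → ℝ}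
    {K : ℝ}    (hQ : ∀ t ∈ s, ∀ t' ∈ s, t ≤ t' → Q t' ≤ K * Q t) :
    ∃ h : α → ℝ, AntitoneOn h s ∧ ∀ t ∈ s, Q t ≤ h t ∧ h t ≤ K * Q t := by
  have hbdd : ∀ t ∈ s, BddAbove (Q '' (s ∩ Ici t)) := by
    rintro t ht
    refine ⟨K * Q t, ?_⟩
    rintro _ ⟨t', ht', rfl⟩
    exact hQ t ht t' ht'.1 ht'.2
  refine ⟨fun t => sSup (Q '' (s ∩ Ici t)), fun t ht t' ht' htt' => ?_,
    fun t ht => ⟨?_, ?_⟩⟩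
  · exact csSup_le_csSup (hbdd t ht) ⟨Q t', t', ⟨ht', le_rfl⟩, rfl⟩
      (image_mono fun x hx => ⟨hx.1, htt'.trans hx.2⟩)
  · exact le_csSup (hbdd t ht) ⟨t, ⟨ht, le_rfl⟩, rfl⟩
  · refine csSup_le ⟨Q t, t, ⟨ht, le_rfl⟩, rfl⟩ ?_
    rintro _ ⟨t', ht', rfl⟩
    exact hQ t ht t' ht'.1 ht'.2

lemma setLIntegral_le_of_quasiAntitoneOn [NullSingletonClass μ]
    (hμν : ∀ m ∈ Ioc 0 r, μ (Ioo 0 m) ≤ C * ν (Ioo 0 m)) {Q : ℝ → ℝ} {K : ℝ}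
    (hQ : ∀ t ∈ Ioo 0 r, ∀ t' ∈ Ioo 0 r, t ≤ t' → Q t' ≤ K * Q t)
    (hnn : ∀ t ∈ Ioo 0 r, 0 ≤ Q t) :
    ∫⁻ t in Ioo 0 r, ENNReal.ofReal (Q t) ∂μ ≤
      C * ENNReal.ofReal K * ∫⁻ t in Ioo 0 r, ENNReal.ofReal (Q t) ∂ν := by
  obtain ⟨h, hanti, hQh⟩ := exists_antitoneOn_le_le_mul hQ
  calc ∫⁻ t in Ioo 0 r, ENNReal.ofReal (Q t) ∂μ
      ≤ ∫⁻ t in Ioo 0 r, ENNReal.ofReal (h t) ∂μ :=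
        setLIntegral_mono' measurableSet_Ioo fun t ht => ENNReal.ofReal_le_ofReal (hQh t ht).1
    _ ≤ C * ∫⁻ t in Ioo 0 r, ENNReal.ofReal (h t) ∂ν :=
        setLIntegral_le_of_antitoneOn hμν hanti fun t ht => (hnn t ht).trans (hQh t ht).1
    _ ≤ C * ∫⁻ t in Ioo 0 r, ENNReal.ofReal K * ENNReal.ofReal (Q t) ∂ν := by
        refine mul_le_mul_right (setLIntegral_mono' measurableSet_Ioo fun t ht => ?_) C
        rw [← ENNReal.ofReal_mul' (hnn t ht)]
        exact ENNReal.ofReal_le_ofReal (hQh t ht).2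
    _ = C * ENNReal.ofReal K * ∫⁻ t in Ioo 0 r, ENNReal.ofReal (Q t) ∂ν := by
        rw [lintegral_const_mul' _ _ ENNReal.ofReal_ne_top, mul_assoc]

end AntitoneComparison

section HardyWeight

variable {w : ℝ → ℝ}

lemma Wf_nonneg (hw : IsWeightOn w) (r : ℝ) : 0 ≤ Wf w r :=
  setIntegral_nonneg measurableSet_Ioo fun t ht => (hw.1 t ht.1).le

lemma Wf_pos (hw : IsWeightOn w) {r : ℝ} (hr : 0 < r) : 0 < Wf w r := by
  rw [Wf, setIntegral_pos_iff_support_of_nonneg_ae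
    ((ae_restrict_iff' measurableSet_Ioo).mpr (.of_forall fun t ht => (hw.1 t ht.1).le))
    (hw.2 r hr),
    inter_eq_right.mpr fun t ht => Function.mem_support.mpr (hw.1 t ht.1).ne']
  simpa using hr

lemma Wf_monotoneOn (hw : IsWeightOn w) : MonotoneOn (Wf w) (Ioi 0) := fun _ _ r hr hrr' =>
  setIntegral_mono_set (hw.2 r hr)
    ((ae_restrict_iff' measurableSet_Ioo).mpr (.of_forall fun t ht => (hw.1 t ht.1).le))
    (Ioo_subset_Ioo_right hrr').eventuallyLE

lemma ofReal_Wf_eq_lintegral (hw : IsWeightOn w) {r : ℝ} (hr : 0 < r) :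
    ENNReal.ofReal (Wf w r) = ∫⁻ t in Ioo 0 r, ENNReal.ofReal (w t) :=
  ofReal_integral_eq_lintegral_ofReal (hw.2 r hr)
    ((ae_restrict_iff' measurableSet_Ioo).mpr (.of_forall fun t ht => (hw.1 t ht.1).le))

lemma setLIntegral_Wf_div_mul_le (hw : IsWeightOn w) {C : ℝ}
    (hB : ∀ r, 0 < r →
      ∫⁻ t in Ioo 0 r, ENNReal.ofReal (Wf w t / t) ≤ ENNReal.ofReal (C * Wf w r))
    {r : ℝ} (hr : 0 < r) {Q : ℝ → ℝ} {K : ℝ}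
    (hQ : ∀ t ∈ Ioo 0 r, ∀ t' ∈ Ioo 0 r, t ≤ t' → Q t' ≤ K * Q t)
    (hnn : ∀ t ∈ Ioo 0 r, 0 ≤ Q t) :
    ∫⁻ t in Ioo 0 r, ENNReal.ofReal (Wf w t / t) * ENNReal.ofReal (Q t) ≤
      ENNReal.ofReal C * ENNReal.ofReal K * ∫⁻ t in Ioo 0 r, ENNReal.ofReal (Q t * w t) := by
  set μ := volume.withDensity fun t => ENNReal.ofReal (Wf w t / t)
  set ν := volume.withDensity fun t => ENNReal.ofReal (w t)
  have hμν : ∀ m ∈ Ioc 0 r, μ (Ioo 0 m) ≤ ENNReal.ofReal C * ν (Ioo 0 m) := fun m hm => by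
    rw [withDensity_apply _ measurableSet_Ioo, withDensity_apply _ measurableSet_Ioo,
      ← ofReal_Wf_eq_lintegral hw hm.1, ← ENNReal.ofReal_mul' (Wf_nonneg hw m)]
    exact hB m hm.1
  have hWμ : ∫⁻ t in Ioo 0 r, ENNReal.ofReal (Q t) ∂μ =
      ∫⁻ t in Ioo 0 r, ENNReal.ofReal (Wf w t / t) * ENNReal.ofReal (Q t) :=
    setLIntegral_withDensity_eq_setLIntegral_mul_non_measurable₀ _
      (((aemeasurable_restrict_of_monotoneOn measurableSet_Ioo
        ((Wf_monotoneOn hw).mono Ioo_subset_Ioi_self)).div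
          measurable_id.aemeasurable).ennreal_ofReal)
      _ measurableSet_Ioo (.of_forall fun _ => ENNReal.ofReal_lt_top)
  have hwν : ∫⁻ t in Ioo 0 r, ENNReal.ofReal (Q t) ∂ν =
      ∫⁻ t in Ioo 0 r, ENNReal.ofReal (Q t * w t) := by
    rw [setLIntegral_withDensity_eq_setLIntegral_mul_non_measurable₀ _
      (hw.2 r hr).aemeasurable.ennreal_ofReal _ measurableSet_Ioo
      (.of_forall fun _ => ENNReal.ofReal_lt_top)]
    refine setLIntegral_congr_fun measurableSet_Ioo fun t ht => ?_
    rw [Pi.mul_apply, ENNReal.ofReal_mul (hnn t ht), mul_comm]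
  rw [← hWμ, ← hwν]
  exact setLIntegral_le_of_quasiAntitoneOn hμν hQ hnn

end HardyWeight

section PhiI

variable {u : ℝ → ℝ} {a b : ℝ}

lemma IsWeight.integrableOn_of_subset_Ioo (hu : IsWeight u) {E : Set ℝ} (hE : E ⊆ Ioo a b) :
    IntegrableOn u E :=
  (hu.2.integrableOn_isCompact isCompact_Icc).mono_set (hE.trans Ioo_subset_Icc_self)

lemma wInt_Ioo_pos (hu : IsWeight u) (hab : a < b) : 0 < wInt u (Ioo a b) := by
  rw [wInt, setIntegral_pos_iff_support_of_nonneg_ae (.of_forall fun x => (hu.1 x).le)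
      (hu.integrableOn_of_subset_Ioo subset_rfl),
    inter_eq_right.mpr fun x _ => Function.mem_support.mpr (hu.1 x).ne']
  simpa using hab

lemma volume_eq_zero_of_wInt_nonpos (hu : IsWeight u) {E : Set ℝ} (hE : E ⊆ Ioo a b)
    (h0 : wInt u E ≤ 0) : volume E = 0 := by
  have hu0 : u =ᵐ[volume.restrict E] 0 :=
    (integral_eq_zero_iff_of_nonneg_ae (.of_forall fun x => (hu.1 x).le)
      (hu.integrableOn_of_subset_Ioo hE)).mp
      (h0.antisymm (integral_nonneg fun x => (hu.1 x).le))
  have hne : {x | u x ≠ 0} = univ := eq_univ_of_forall fun x => (hu.1 x).ne'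
  simpa [Filter.EventuallyEq, ae_iff, hne] using hu0

/-- Intermediate value theorem for the continuous function `x ↦ u(E ∩ (a, x])`. -/
lemma exists_wInt_inter_Ioc_eq (hu : IsWeight u) (hab : a < b) {E : Set ℝ} (hEm : MeasurableSet E)
    (hE : E ⊆ Ioo a b) {c : ℝ} (hc0 : 0 ≤ c) (hcE : c ≤ wInt u E) :
    ∃ x, wInt u (E ∩ Ioc a x) = c := by
  have hint (c d : ℝ) : IntervalIntegrable (E.indicator u) volume c d :=
    ((hu.2.integrableOn_isCompact isCompact_uIcc).indicator hEm).intervalIntegrable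
  have hF : ∀ x, a ≤ x → ∫ t in a..x, E.indicator u t = wInt u (E ∩ Ioc a x) :=
    fun x hx => by
    rw [intervalIntegral.integral_of_le hx, setIntegral_indicator hEm, wInt, inter_comm]
  have hmem : c ∈ Icc (∫ t in a..a, E.indicator u t) (∫ t in a..b, E.indicator u t) := by
    rw [intervalIntegral.integral_same, hF b hab.le,
      inter_eq_self_of_subset_left (hE.trans Ioo_subset_Ioc_self)]
    exact ⟨hc0, hcE⟩
  obtain ⟨x, hx, hFx⟩ := intermediate_value_Icc hab.le
    (intervalIntegral.continuous_primitive hint a).continuousOn hmem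
  exact ⟨x, (hF x hx.1).symm.trans hFx⟩

lemma phiI_bddAbove (hab : a < b) (t : ℝ) :
    BddAbove {m : ℝ | ∃ E : Set ℝ, MeasurableSet E ∧ E ⊆ Ioo a b ∧
      wInt u E = t ∧ (volume E).toReal = m} := by
  refine ⟨b - a, ?_⟩
  rintro _ ⟨E, -, hE, -, rfl⟩
  calc (volume E).toReal ≤ (volume (Ioo a b)).toReal :=
        ENNReal.toReal_mono measure_Ioo_lt_top.ne (measure_mono hE)
    _ = b - a := by simp [hab.le]

lemma le_phiI (hab : a < b) {E : Set ℝ} (hEm : MeasurableSet E) (hE : E ⊆ Ioo a b) :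
    (volume E).toReal ≤ phiI u a b (wInt u E) :=
  le_csSup (phiI_bddAbove hab _) ⟨E, hEm, hE, rfl, rfl⟩

lemma phiI_nonneg (t : ℝ) : 0 ≤ phiI u a b t :=
  Real.sSup_nonneg <| by
    rintro _ ⟨E, -, -, -, rfl⟩
    exact ENNReal.toReal_nonneg

/-- Enlarge `E` inside `(a, b)` until its `u`-measure is exactly `t`. -/
lemma volume_le_phiI_of_wInt_le (hu : IsWeight u) (hab : a < b) {E : Set ℝ}
    (hEm : MeasurableSet E) (hE : E ⊆ Ioo a b) {t : ℝ} (hEt : wInt u E ≤ t)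
    (htr : t ≤ wInt u (Ioo a b)) : (volume E).toReal ≤ phiI u a b t := by
  have hsplit : wInt u E + wInt u (Ioo a b \ E) = wInt u (Ioo a b) := by
    rw [wInt, wInt, wInt,
      ← integral_inter_add_sdiff hEm (hu.integrableOn_of_subset_Ioo subset_rfl),
      inter_eq_right.mpr hE]
  obtain ⟨x, hx⟩ := exists_wInt_inter_Ioc_eq hu hab (measurableSet_Ioo.diff hEm) sdiff_subset
    (sub_nonneg.mpr hEt) (by linarith)
  set F := (Ioo a b \ E) ∩ Ioc a x
  have hFm : MeasurableSet F := (measurableSet_Ioo.diff hEm).inter measurableSet_Ioc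
  have hF : F ⊆ Ioo a b := inter_subset_left.trans sdiff_subset
  have hEF : wInt u (E ∪ F) = t := by
    rw [wInt, setIntegral_union (disjoint_sdiff_right.mono_right inter_subset_left) hFm
      (hu.integrableOn_of_subset_Ioo hE) (hu.integrableOn_of_subset_Ioo hF)]
    change wInt u E + wInt u F = t
    rw [hx]
    ring
  calc (volume E).toReal ≤ (volume (E ∪ F)).toReal :=
        ENNReal.toReal_mono ((measure_mono (union_subset hE hF)).trans_lt measure_Ioo_lt_top).ne
          (measure_mono subset_union_left)
    _ ≤ phiI u a b t := hEF ▸ le_phiI hab (hEm.union hFm) (union_subset hE hF)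

/-- Cut `E` into `n` pieces of `u`-measure at most `t`. -/
lemma volume_le_mul_phiI_of_wInt_le_mul (hu : IsWeight u) (hab : a < b) {t : ℝ} (ht0 : 0 < t)
    (htr : t ≤ wInt u (Ioo a b)) (n : ℕ) {E : Set ℝ} (hEm : MeasurableSet E)
    (hE : E ⊆ Ioo a b) (hEn : wInt u E ≤ n * t) : (volume E).toReal ≤ n * phiI u a b t := by
  induction n generalizing E with
  | zero =>
    simp only [Nat.cast_zero, zero_mul] at hEn ⊢
    simp [volume_eq_zero_of_wInt_nonpos hu hE hEn]
  | succ n ih =>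
    have hφ := phiI_nonneg (u := u) (a := a) (b := b) t
    push_cast at hEn ⊢
    by_cases hEt : wInt u E ≤ t
    · nlinarith [volume_le_phiI_of_wInt_le hu hab hEm hE hEt htr, (n.cast_nonneg : (0:ℝ) ≤ n)]
    obtain ⟨x, hx⟩ := exists_wInt_inter_Ioc_eq hu hab hEm hE ht0.le (not_le.mp hEt).le
    have hIE := hu.integrableOn_of_subset_Ioo hE
    have hsplit : wInt u (E ∩ Ioc a x) + wInt u (E \ Ioc a x) = wInt u E :=
      integral_inter_add_sdiff measurableSet_Ioc hIE
    have hvol :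
        (volume (E ∩ Ioc a x)).toReal + (volume (E \ Ioc a x)).toReal = (volume E).toReal := by
      rw [← ENNReal.toReal_add, measure_inter_add_sdiff _ measurableSet_Ioc]
      exacts [((measure_mono (inter_subset_left.trans hE)).trans_lt measure_Ioo_lt_top).ne,
        ((measure_mono (sdiff_subset.trans hE)).trans_lt measure_Ioo_lt_top).ne]
    have h₁ : (volume (E ∩ Ioc a x)).toReal ≤ phiI u a b t :=
      hx ▸ le_phiI hab (hEm.inter measurableSet_Ioc) (inter_subset_left.trans hE)
    have h₂ := ih (hEm.diff measurableSet_Ioc) (sdiff_subset.trans hE) (by linarith)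
    linarith

lemma phiI_le_two_mul_div_mul (hu : IsWeight u) (hab : a < b) {t s : ℝ} (ht : 0 < t)
    (hts : t ≤ s) (hsr : s ≤ wInt u (Ioo a b)) : phiI u a b s ≤ 2 * (s / t) * phiI u a b t := by
  have hφ := phiI_nonneg (u := u) (a := a) (b := b) t
  have hst : 1 ≤ s / t := (one_le_div ht).mpr hts
  refine Real.sSup_le ?_ (by positivity)
  rintro _ ⟨E, hEm, hE, hEs, rfl⟩
  have hn : wInt u E ≤ (⌈s / t⌉₊ : ℝ) * t := by
    rw [hEs, ← div_le_iff₀ ht]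
    exact Nat.le_ceil _
  have hceil : (⌈s / t⌉₊ : ℝ) ≤ s / t + 1 := (Nat.ceil_lt_add_one (by positivity)).le
  nlinarith [volume_le_mul_phiI_of_wInt_le_mul hu hab ht (hts.trans hsr) _ hEm hE hn]

end PhiI

lemma phiI_div_Wf_le {u w : ℝ → ℝ} {a b C₀ : ℝ} (hu : IsWeight u) (hw : IsWeightOn w)
    (hab : a < b) (hqi : ∀ t s : ℝ, 0 < t → t ≤ s → Wf w t / t ≤ C₀ * (Wf w s / s))
    {t s : ℝ} (ht : 0 < t) (hts : t ≤ s) (hsr : s ≤ wInt u (Ioo a b)) :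
    phiI u a b s / Wf w s ≤ 2 * C₀ * (phiI u a b t / Wf w t) := by
  have hs := ht.trans_le hts
  have hWt := Wf_pos hw ht
  have hst : s / t ≤ C₀ * Wf w s / Wf w t := by
    have := hqi t s ht hts
    rw [mul_div_assoc', div_le_div_iff₀ ht hs] at this
    rw [div_le_div_iff₀ ht hWt]
    linarith
  rw [div_le_iff₀ (Wf_pos hw hs)]
  calc phiI u a b s ≤ 2 * (s / t) * phiI u a b t := phiI_le_two_mul_div_mul hu hab ht hts hsr
    _ ≤ 2 * (C₀ * Wf w s / Wf w t) * phiI u a b t := by gcongr; exact phiI_nonneg t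
    _ = 2 * C₀ * (phiI u a b t / Wf w t) * Wf w s := by ring

lemma div_rpow_le_rpow_sub_one_mul {x W t A q : ℝ} (hx : 0 ≤ x) (hW : 0 < W) (ht : 0 < t)
    (hWA : W / t ≤ A) (hq : 1 ≤ q) :
    (x / t) ^ q ≤ A ^ (q - 1) * (W / t * (x / W) ^ q) := by
  have hWt : 0 < W / t := div_pos hW ht
  calc (x / t) ^ q = (W / t) ^ (q - 1) * (W / t * (x / W) ^ q) := by
        rw [← mul_assoc, ← Real.rpow_add_one hWt.ne', sub_add_cancel,
          ← Real.mul_rpow hWt.le (div_nonneg hx hW.le)]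
        field_simp
    _ ≤ A ^ (q - 1) * (W / t * (x / W) ^ q) := by gcongr

lemma lintegral_phiI_div_rpow_le {u w : ℝ → ℝ} {a b C₀ CB q : ℝ} (hu : IsWeight u)
    (hw : IsWeightOn w) (hab : a < b) (hC₀ : 0 < C₀)
    (hqi : ∀ t s : ℝ, 0 < t → t ≤ s → Wf w t / t ≤ C₀ * (Wf w s / s))
    (hB : ∀ r, 0 < r →
      ∫⁻ t in Ioo 0 r, ENNReal.ofReal (Wf w t / t) ≤ ENNReal.ofReal (CB * Wf w r))
    (hq : 1 ≤ q) :
    ∫⁻ t in Ioo 0 (wInt u (Ioo a b)), ENNReal.ofReal ((phiI u a b t / t) ^ q) ≤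
      ENNReal.ofReal ((C₀ * (Wf w (wInt u (Ioo a b)) / wInt u (Ioo a b))) ^ (q - 1)) *
        (ENNReal.ofReal CB * ENNReal.ofReal ((2 * C₀) ^ q)) *
        ∫⁻ t in Ioo 0 (wInt u (Ioo a b)),
          ENNReal.ofReal ((phiI u a b t / Wf w t) ^ q * w t) := by
  set r := wInt u (Ioo a b)
  have hr : 0 < r := wInt_Ioo_pos hu hab
  have hX : 0 ≤ C₀ * (Wf w r / r) := by have := Wf_pos hw hr; positivity
  have hφW (t : ℝ) : 0 ≤ phiI u a b t / Wf w t := div_nonneg (phiI_nonneg t) (Wf_nonneg hw t)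
  have hQ : ∀ t ∈ Ioo 0 r, ∀ t' ∈ Ioo 0 r, t ≤ t' →
      (phiI u a b t' / Wf w t') ^ q ≤ (2 * C₀) ^ q * (phiI u a b t / Wf w t) ^ q := by
    intro t ht t' ht' htt'
    rw [← Real.mul_rpow (by positivity) (hφW t)]
    exact Real.rpow_le_rpow (hφW t') (phiI_div_Wf_le hu hw hab hqi ht.1 htt' ht'.2.le)
      (by linarith)
  calc ∫⁻ t in Ioo 0 r, ENNReal.ofReal ((phiI u a b t / t) ^ q)
      ≤ ∫⁻ t in Ioo 0 r, ENNReal.ofReal ((C₀ * (Wf w r / r)) ^ (q - 1)) *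
          (ENNReal.ofReal (Wf w t / t) * ENNReal.ofReal ((phiI u a b t / Wf w t) ^ q)) := by
        refine setLIntegral_mono' measurableSet_Ioo fun t ht => ?_
        rw [← ENNReal.ofReal_mul (div_pos (Wf_pos hw ht.1) ht.1).le,
          ← ENNReal.ofReal_mul (Real.rpow_nonneg hX _)]
        exact ENNReal.ofReal_le_ofReal (div_rpow_le_rpow_sub_one_mul (phiI_nonneg t)
          (Wf_pos hw ht.1) ht.1 (hqi t r ht.1 ht.2.le) hq)
    _ = ENNReal.ofReal ((C₀ * (Wf w r / r)) ^ (q - 1)) *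
          ∫⁻ t in Ioo 0 r, ENNReal.ofReal (Wf w t / t) *
            ENNReal.ofReal ((phiI u a b t / Wf w t) ^ q) :=
        lintegral_const_mul' _ _ ENNReal.ofReal_ne_top
    _ ≤ _ := by
        rw [mul_assoc]
        gcongr
        exact setLIntegral_Wf_div_mul_le hw hB hr hQ
          fun t _ => Real.rpow_nonneg (hφW t) q

lemma rpow_conjExponent_sub_one_mul_mul_rpow {p X Y Z : ℝ} (hp : 1 < p) (hX : 0 ≤ X)
    (hY : 0 ≤ Y) (hZ : 0 ≤ Z) :
    (X ^ (p / (p - 1) - 1) * (Y * Z ^ (p / (p - 1)))) ^ ((p - 1) / p) =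
      X ^ (1 / p) * Y ^ ((p - 1) / p) * Z := by
  have hp1 : p - 1 ≠ 0 := by linarith
  have hp0 : p ≠ 0 := by linarith
  rw [Real.mul_rpow (by positivity) (by positivity), Real.mul_rpow hY (by positivity),
    ← Real.rpow_mul hX, ← Real.rpow_mul hZ,
    show (p / (p - 1) - 1) * ((p - 1) / p) = 1 / p by field_simp; ring,
    show p / (p - 1) * ((p - 1) / p) = 1 by field_simp, Real.rpow_one, mul_assoc]

/-- if `W(t)/t` is quasi-increasing, `w ∈ B*_∞` and the generalized Hardy
condition holds, then the corresponding `w = 1` condition (the `A_p`-type condition) holds. -/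
theorem Ap_type_condition_of_genHardy (p : ℝ) (hp : 1 < p) (u w : ℝ → ℝ)
    (hu : IsWeight u) (hw : IsWeightOn w)
    (hqi : ∃ C₀ : ℝ, 0 < C₀ ∧ ∀ t s : ℝ, 0 < t → t ≤ s → Wf w t / t ≤ C₀ * (Wf w s / s))
    (hBstar : BstarInfty w)
    (hmain : ∃ C : ℝ, 0 < C ∧ ∀ a b : ℝ, a < b →
      (∫⁻ t in Set.Ioo (0:ℝ) (wInt u (Set.Ioo a b)),
          ENNReal.ofReal ((phiI u a b t / Wf w t) ^ (p/(p-1)) * w t)) ^ ((p-1)/p)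
        ≤ ENNReal.ofReal (C * (b - a) / Wf w (wInt u (Set.Ioo a b)) ^ (1/p))) :
    ∃ C' : ℝ, 0 < C' ∧ ∀ a b : ℝ, a < b →
      (∫⁻ t in Set.Ioo (0:ℝ) (wInt u (Set.Ioo a b)),
          ENNReal.ofReal ((phiI u a b t / t) ^ (p/(p-1)))) ^ ((p-1)/p)
        ≤ ENNReal.ofReal (C' * (b - a) / wInt u (Set.Ioo a b) ^ (1/p)) := by
  obtain ⟨C₀, hC₀, hqi⟩ := hqi
  obtain ⟨CB, hCB, hB⟩ := hBstar
  obtain ⟨C, hC, hmain⟩ := hmain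
  have hq : 0 ≤ (p - 1) / p := div_nonneg (by linarith) (by linarith)
  refine ⟨C₀ ^ (1 / p) * CB ^ ((p - 1) / p) * (2 * C₀) * C, by positivity, fun a b hab => ?_⟩
  have hr := wInt_Ioo_pos hu hab
  have hWr := Wf_pos hw hr
  set r := wInt u (Ioo a b)
  set X := C₀ * (Wf w r / r)
  set Y := CB * (2 * C₀) ^ (p / (p - 1))
  have hXY : 0 ≤ X ^ (p / (p - 1) - 1) * Y := by positivity
  have hI := lintegral_phiI_div_rpow_le hu hw hab hC₀ hqi hB
    (q := p / (p - 1)) ((one_le_div (by linarith)).mpr (by linarith))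
  rw [← ENNReal.ofReal_mul hCB.le, ← ENNReal.ofReal_mul (by positivity)] at hI
  calc _ ≤ (ENNReal.ofReal (X ^ (p / (p - 1) - 1) * Y) * ∫⁻ t in Ioo 0 r,
          ENNReal.ofReal ((phiI u a b t / Wf w t) ^ (p / (p - 1)) * w t)) ^ ((p - 1) / p) :=
        ENNReal.rpow_le_rpow hI hq
    _ ≤ ENNReal.ofReal (X ^ (p / (p - 1) - 1) * Y) ^ ((p - 1) / p) *
          ENNReal.ofReal (C * (b - a) / Wf w r ^ (1 / p)) := by
        rw [ENNReal.mul_rpow_of_nonneg _ _ hq]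
        exact mul_le_mul_right (hmain a b hab) _
    _ = _ := by
        rw [ENNReal.ofReal_rpow_of_nonneg hXY hq, ← ENNReal.ofReal_mul (by positivity),
          rpow_conjExponent_sub_one_mul_mul_rpow hp (by positivity) hCB.le (by positivity),
          Real.mul_rpow hC₀.le (by positivity), Real.div_rpow hWr.le hr.le]
        field_simp

end
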